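/- arXiv:2602.09799 — 2 statements merged into one kernel-verified Lean document; each statement's English description precedes it below -/
import Mathlib

section
/- Addition of block-encodings: if U₁ is an (α₁, m₁, ε₁)-block-encoding of A₁ and U₂ is an (α₂, m₂, ε₂)-block-encoding of A₂ (i.e., ‖A_i − α_i(⟨0^{m_i}|⊗I)U_i(|0^{m_i}⟩⊗I)‖ ≤ ε_i), then there exists a unitary that is an (α₁+α₂, m₁+m₂+1, ε₁+ε₂)-block-encoding of A₁+A₂; in particular the error of the LCU combination (using appropriate state-preparation unitaries) is bounded by ε₁ + ε₂. -/
/-- The spectral (operator 2-) norm of a complex matrix. -/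
noncomputable def specNorm {m n : Type*} [Fintype m] [Fintype n] [DecidableEq n]
    (B : Matrix m n ℂ) : ℝ :=
  ‖LinearMap.toContinuousLinearMap (Matrix.toEuclideanLin B)‖

/-- `U` is an `(α, ·, ε)`-block-encoding of `A` with ancilla register of type `a`
whose all-zero state is `z`: `U` is unitary and
`‖A − α(⟨z|⊗I)U(|z⟩⊗I)‖ ≤ ε`. -/
def IsBlockEncoding {a s : Type*} [Fintype a] [DecidableEq a] [Fintype s] [DecidableEq s]
    (z : a) (α ε : ℝ) (U : Matrix (a × s) (a × s) ℂ) (A : Matrix s s ℂ) : Prop :=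
  U ∈ Matrix.unitaryGroup (a × s) ℂ ∧
  specNorm (A - α • Matrix.of fun i j : s => U (z, i) (z, j)) ≤ ε

/-!
Linear combination of unitaries. A rotation `T` prepares the control qubit in
`√(α₁/α)|0⟩ + √(α₂/α)|1⟩` with `α = α₁ + α₂`; controlled on it, `U₁` or `U₂` is applied (each
padded with the identity on the other's ancilla); then `T†` undoes the preparation. The
`(0, 0)` ancilla block of `T† · SELECT · T` is `∑ₖ |T k 0|² Bₖ = (α₁ B₁ + α₂ B₂) / α`, where `Bₖ`
is the block encoded by `Uₖ`, so the error is at most `ε₁ + ε₂` by the triangle inequality. When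
`α = 0` any unitary `T` will do.
-/

open Matrix Kronecker

lemma specNorm_sum_le {ι m n : Type*} [Fintype m] [Fintype n] [DecidableEq n]
    (t : Finset ι) (B : ι → Matrix m n ℂ) :
    specNorm (∑ k ∈ t, B k) ≤ ∑ k ∈ t, specNorm (B k) := by
  unfold specNorm
  rw [map_sum, map_sum]
  exact norm_sum_le _ _

namespace Matrix

variable {R : Type*} [CommRing R] [StarRing R]

lemma reindex_mem_unitaryGroup {m l : Type*} [Fintype m] [DecidableEq m] [Fintype l]
    [DecidableEq l] (e : m ≃ l) {A : Matrix m m R} (hA : A ∈ unitaryGroup m R) :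
    reindex e e A ∈ unitaryGroup l R := by
  rw [mem_unitaryGroup_iff, star_eq_conjTranspose] at *
  rw [reindex_apply, conjTranspose_submatrix, submatrix_mul_equiv, hA, submatrix_one_equiv]

lemma blockDiagonal_mem_unitaryGroup {m o : Type*} [Fintype m] [DecidableEq m] [Fintype o]
    [DecidableEq o] {d : o → Matrix m m R} (hd : ∀ k, d k ∈ unitaryGroup m R) :
    blockDiagonal d ∈ unitaryGroup (m × o) R := by
  simp only [mem_unitaryGroup_iff, star_eq_conjTranspose] at *
  rw [blockDiagonal_conjTranspose, ← blockDiagonal_mul]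
  simp only [hd]
  exact blockDiagonal_one

end Matrix

namespace IsBlockEncoding

variable {a a' b s : Type*} [Fintype a] [DecidableEq a] [Fintype a'] [DecidableEq a']
  [Fintype b] [DecidableEq b] [Fintype s] [DecidableEq s]
  {z : a} {α ε : ℝ} {U : Matrix (a × s) (a × s) ℂ} {A : Matrix s s ℂ}

lemma reindexAncilla (e : a ≃ a') (h : IsBlockEncoding z α ε U A) :
    IsBlockEncoding (e z) α ε (reindex (e.prodCongr (.refl s)) (e.prodCongr (.refl s)) U) A := by
  refine ⟨reindex_mem_unitaryGroup _ h.1, ?_⟩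
  simpa using h.2

lemma one_kronecker (w : b) (h : IsBlockEncoding z α ε U A) :
    IsBlockEncoding (w, z) α ε
      (reindex (Equiv.prodAssoc b a s).symm (Equiv.prodAssoc b a s).symm
        ((1 : Matrix b b ℂ) ⊗ₖ U)) A := by
  refine ⟨reindex_mem_unitaryGroup _ (kronecker_mem_unitary (one_mem _) h.1), ?_⟩
  simpa using h.2

end IsBlockEncoding

section LCU

variable {ι a s : Type*} [DecidableEq ι]

def selectMatrix (U : ι → Matrix (a × s) (a × s) ℂ) : Matrix ((ι × a) × s) ((ι × a) × s) ℂ :=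
  reindex ((Equiv.prodComm _ _).trans (Equiv.prodAssoc ι a s).symm)
    ((Equiv.prodComm _ _).trans (Equiv.prodAssoc ι a s).symm) (blockDiagonal U)

lemma selectMatrix_apply (U : ι → Matrix (a × s) (a × s) ℂ) (k l : ι) (x y : a) (i j : s) :
    selectMatrix U ((k, x), i) ((l, y), j) = if k = l then U k (x, i) (y, j) else 0 := by
  simp [selectMatrix, blockDiagonal_apply]

variable [Fintype ι] [Fintype a] [DecidableEq a] [Fintype s] [DecidableEq s]

lemma selectMatrix_mem_unitaryGroup {U : ι → Matrix (a × s) (a × s) ℂ}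
    (hU : ∀ k, U k ∈ unitaryGroup (a × s) ℂ) : selectMatrix U ∈ unitaryGroup ((ι × a) × s) ℂ :=
  reindex_mem_unitaryGroup _ (blockDiagonal_mem_unitaryGroup hU)

def lcuMatrix (T : Matrix ι ι ℂ) (U : ι → Matrix (a × s) (a × s) ℂ) :
    Matrix ((ι × a) × s) ((ι × a) × s) ℂ :=
  ((Tᴴ ⊗ₖ (1 : Matrix a a ℂ)) ⊗ₖ (1 : Matrix s s ℂ)) * selectMatrix U *
    ((T ⊗ₖ (1 : Matrix a a ℂ)) ⊗ₖ (1 : Matrix s s ℂ))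

lemma lcuMatrix_mem_unitaryGroup {T : Matrix ι ι ℂ} {U : ι → Matrix (a × s) (a × s) ℂ}
    (hT : T ∈ unitaryGroup ι ℂ) (hU : ∀ k, U k ∈ unitaryGroup (a × s) ℂ) :
    lcuMatrix T U ∈ unitaryGroup ((ι × a) × s) ℂ := by
  have hTs : Tᴴ ∈ unitaryGroup ι ℂ := Unitary.star_mem hT
  exact mul_mem (mul_mem
    (kronecker_mem_unitary (kronecker_mem_unitary hTs (one_mem _)) (one_mem _))
    (selectMatrix_mem_unitaryGroup hU))
    (kronecker_mem_unitary (kronecker_mem_unitary hT (one_mem _)) (one_mem _))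

lemma lcuMatrix_apply_diag (T : Matrix ι ι ℂ) (U : ι → Matrix (a × s) (a × s) ℂ)
    (i₀ : ι) (z : a) (i j : s) :
    lcuMatrix T U ((i₀, z), i) ((i₀, z), j) =
      ∑ k, (Complex.normSq (T k i₀) : ℂ) * U k (z, i) (z, j) := by
  simp only [lcuMatrix, mul_apply, kroneckerMap_apply, conjTranspose_apply, one_apply,
    Fintype.sum_prod_type, selectMatrix_apply, mul_ite, ite_mul, mul_one, mul_zero, zero_mul,
    Finset.sum_ite_eq, Finset.sum_ite_eq', Finset.mem_univ, ↓reduceIte]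
  refine Finset.sum_congr rfl fun k _ => ?_
  rw [Complex.normSq_eq_conj_mul_self, RCLike.star_def]
  ring

/-- `hα` says that column `i₀` of `T` is `∑ₖ √(αₖ / ∑ α) |k⟩` up to phases; it is written without
division so that `∑ α = 0` is allowed. -/
theorem IsBlockEncoding.lcu {T : Matrix ι ι ℂ} (hT : T ∈ unitaryGroup ι ℂ) (i₀ : ι) {z : a}
    {α ε : ι → ℝ} (hα : ∀ k, (∑ l, α l) * Complex.normSq (T k i₀) = α k)
    {U : ι → Matrix (a × s) (a × s) ℂ} {A : ι → Matrix s s ℂ}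
    (hU : ∀ k, IsBlockEncoding z (α k) (ε k) (U k) (A k)) :
    IsBlockEncoding (i₀, z) (∑ k, α k) (∑ k, ε k) (lcuMatrix T U) (∑ k, A k) := by
  refine ⟨lcuMatrix_mem_unitaryGroup hT fun k => (hU k).1, ?_⟩
  have hblock : (∑ k, α k) • Matrix.of (fun i j => lcuMatrix T U ((i₀, z), i) ((i₀, z), j)) =
      ∑ k, α k • Matrix.of fun i j => U k (z, i) (z, j) := by
    ext i j
    simp only [lcuMatrix_apply_diag, Matrix.smul_apply, of_apply, Matrix.sum_apply,
      Finset.smul_sum, Complex.real_smul, ← mul_assoc, ← Complex.ofReal_mul, hα]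
  calc specNorm (∑ k, A k - (∑ k, α k) •
          Matrix.of fun i j => lcuMatrix T U ((i₀, z), i) ((i₀, z), j))
      = specNorm (∑ k, (A k - α k • Matrix.of fun i j => U k (z, i) (z, j))) := by
        rw [hblock, Finset.sum_sub_distrib]
    _ ≤ ∑ k, specNorm (A k - α k • Matrix.of fun i j => U k (z, i) (z, j)) :=
        specNorm_sum_le _ _
    _ ≤ ∑ k, ε k := Finset.sum_le_sum fun k _ => (hU k).2

end LCU

lemma rotation_mem_unitaryGroup {c s : ℝ} (h : c ^ 2 + s ^ 2 = 1) :
    !![(c : ℂ), -(s : ℂ); (s : ℂ), (c : ℂ)] ∈ unitaryGroup (Fin 2) ℂ := by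
  have hc : (c : ℂ) ^ 2 + (s : ℂ) ^ 2 = 1 := by exact_mod_cast h
  rw [mem_unitaryGroup_iff, star_eq_conjTranspose]
  ext i j
  fin_cases i <;> fin_cases j <;>
    simp only [mul_apply, Fin.sum_univ_two, conjTranspose_apply, of_apply, cons_val',
      cons_val_fin_one, cons_val_zero, cons_val_one, Complex.star_def, Complex.conj_ofReal,
      map_neg, one_apply, Fin.zero_eta, Fin.mk_one, Fin.isValue, ↓reduceIte, zero_ne_one,
      one_ne_zero] <;>
    first | ring1 | linear_combination hc

lemma exists_unitary_fin_two_normSq_col_zero (α : Fin 2 → ℝ) (hα : ∀ k, 0 ≤ α k) :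
    ∃ T ∈ unitaryGroup (Fin 2) ℂ, ∀ k, (∑ l, α l) * Complex.normSq (T k 0) = α k := by
  by_cases hsum : ∑ l, α l = 0
  · have hzero : ∀ k, α k = 0 := fun k =>
      (Finset.sum_eq_zero_iff_of_nonneg fun l _ => hα l).1 hsum k (Finset.mem_univ k)
    exact ⟨1, one_mem _, fun k => by rw [hsum, zero_mul, hzero]⟩
  · have hsq : ∀ k, √(α k / ∑ l, α l) ^ 2 = α k / ∑ l, α l := fun k =>
      Real.sq_sqrt (div_nonneg (hα k) (Finset.sum_nonneg fun l _ => hα l))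
    refine ⟨_, rotation_mem_unitaryGroup (c := √(α 0 / ∑ l, α l)) (s := √(α 1 / ∑ l, α l)) ?_,
      Fin.forall_fin_two.2 ⟨?_, ?_⟩⟩
    · rw [hsq, hsq, ← add_div, ← Fin.sum_univ_two, div_self hsum]
    all_goals
      simp only [of_apply, cons_val', cons_val_zero, cons_val_one, empty_val', cons_val_fin_one,
        Complex.normSq_ofReal, ← sq, hsq]
      field_simp

/-- addition of block-encodings via LCU: from an
`(α₁, m₁, ε₁)`-block-encoding of `A₁` and an `(α₂, m₂, ε₂)`-block-encoding of `A₂`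
there exists an `(α₁+α₂, m₁+m₂+1, ε₁+ε₂)`-block-encoding of `A₁+A₂`. -/
theorem stmt13 (n m₁ m₂ : ℕ) (α₁ α₂ ε₁ ε₂ : ℝ) (hα₁ : 0 ≤ α₁) (hα₂ : 0 ≤ α₂)
    (A₁ A₂ : Matrix (Fin (2 ^ n)) (Fin (2 ^ n)) ℂ)
    (U₁ : Matrix (Fin (2 ^ m₁) × Fin (2 ^ n)) (Fin (2 ^ m₁) × Fin (2 ^ n)) ℂ)
    (U₂ : Matrix (Fin (2 ^ m₂) × Fin (2 ^ n)) (Fin (2 ^ m₂) × Fin (2 ^ n)) ℂ)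
    (h₁ : IsBlockEncoding ⟨0, Nat.two_pow_pos m₁⟩ α₁ ε₁ U₁ A₁)
    (h₂ : IsBlockEncoding ⟨0, Nat.two_pow_pos m₂⟩ α₂ ε₂ U₂ A₂) :
    ∃ W : Matrix ((Fin 2 × Fin (2 ^ m₁) × Fin (2 ^ m₂)) × Fin (2 ^ n))
        ((Fin 2 × Fin (2 ^ m₁) × Fin (2 ^ m₂)) × Fin (2 ^ n)) ℂ,
      IsBlockEncoding (0, ⟨0, Nat.two_pow_pos m₁⟩, ⟨0, Nat.two_pow_pos m₂⟩)
        (α₁ + α₂) (ε₁ + ε₂) W (A₁ + A₂) := by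
  obtain ⟨T, hT, hTα⟩ :=
    exists_unitary_fin_two_normSq_col_zero ![α₁, α₂] (Fin.forall_fin_two.2 ⟨hα₁, hα₂⟩)
  have h₁' := (h₁.one_kronecker (⟨0, Nat.two_pow_pos m₂⟩ : Fin (2 ^ m₂))).reindexAncilla
    (Equiv.prodComm _ _)
  have h₂' := h₂.one_kronecker (⟨0, Nat.two_pow_pos m₁⟩ : Fin (2 ^ m₁))
  have hlcu := IsBlockEncoding.lcu hT 0 (ε := ![ε₁, ε₂]) (U := ![_, _]) (A := ![A₁, A₂]) hTα
    (Fin.forall_fin_two.2 ⟨h₁', h₂'⟩)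
  simp only [Fin.sum_univ_two, cons_val_zero, cons_val_one] at hlcu
  exact ⟨_, hlcu⟩
end

section
/- Product of block-encodings: if U₁ is an (α₁, m₁, ε₁)-block-encoding of A₁ and U₂ is an (α₂, m₂, ε₂)-block-encoding of A₂ with ‖A₂‖ ≤ α₂, then (I_{m₂}⊗U₁)(I_{m₁}⊗U₂) (with ancilla registers appropriately tensored) is an (α₁α₂, m₁+m₂, α₁ε₂ + α₂ε₁)-block-encoding of A₁A₂; i.e., ‖A₁A₂ − α₁α₂ Π (I⊗U₁)(I⊗U₂) Π†‖ ≤ α₁ε₂ + α₂ε₁ where Π projects all ancillas to |0⟩. -/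
open scoped Matrix.Norms.L2Operator Kronecker
open Matrix

theorem norm_mul_sub_smul_mul_le {R : Type*} [NormedRing R] [NormedSpace ℝ R]
    [IsScalarTower ℝ R R] [SMulCommClass ℝ R R] {A₁ A₂ B₁ B₂ : R} {α₁ α₂ ε₁ ε₂ : ℝ}
    (hα₁ : 0 ≤ α₁) (hB₁ : ‖B₁‖ ≤ 1) (hA₂ : ‖A₂‖ ≤ α₂)
    (h₁ : ‖A₁ - α₁ • B₁‖ ≤ ε₁) (h₂ : ‖A₂ - α₂ • B₂‖ ≤ ε₂) :
    ‖A₁ * A₂ - (α₁ * α₂) • (B₁ * B₂)‖ ≤ α₁ * ε₂ + α₂ * ε₁ := by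
  have hsplit : A₁ * A₂ - (α₁ * α₂) • (B₁ * B₂)
      = α₁ • (B₁ * (A₂ - α₂ • B₂)) + (A₁ - α₁ • B₁) * A₂ := by
    simp only [mul_sub, sub_mul, mul_smul_comm, smul_mul_assoc, smul_sub, smul_smul]
    abel
  rw [hsplit]
  calc _ ≤ ‖α₁ • (B₁ * (A₂ - α₂ • B₂))‖ + ‖(A₁ - α₁ • B₁) * A₂‖ := norm_add_le _ _
    _ ≤ α₁ * (‖B₁‖ * ‖A₂ - α₂ • B₂‖) + ‖A₁ - α₁ • B₁‖ * ‖A₂‖ := by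
      gcongr
      · refine (norm_smul_le _ _).trans ?_
        rw [Real.norm_of_nonneg hα₁]
        gcongr
        exact norm_mul_le _ _
      · exact norm_mul_le _ _
    _ ≤ α₁ * (1 * ε₂) + ε₁ * α₂ := by gcongr; exact (norm_nonneg _).trans h₁
    _ = α₁ * ε₂ + α₂ * ε₁ := by ring

section L2OpNorm

variable {𝕜 l m n : Type*} [RCLike 𝕜] [Fintype l] [Fintype m] [Fintype n]
  [DecidableEq l] [DecidableEq m] [DecidableEq n]

theorem l2_opNorm_one_le : ‖(1 : Matrix n n 𝕜)‖ ≤ 1 := by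
  rw [cstar_norm_def, map_one]
  exact ContinuousLinearMap.norm_id_le

theorem l2_opNorm_le_one_of_mul_conjTranspose_eq_one {A : Matrix m n 𝕜} (hA : A * Aᴴ = 1) :
    ‖A‖ ≤ 1 := by
  have h : ‖A‖ * ‖A‖ ≤ 1 := by
    rw [← l2_opNorm_conjTranspose A, ← l2_opNorm_conjTranspose_mul_self,
      conjTranspose_conjTranspose, hA]
    exact l2_opNorm_one_le
  nlinarith [norm_nonneg A]

theorem l2_opNorm_one_submatrix_le {f : l → m} (hf : Function.Injective f) :
    ‖(1 : Matrix m m 𝕜).submatrix f id‖ ≤ 1 := by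
  refine l2_opNorm_le_one_of_mul_conjTranspose_eq_one ?_
  rw [conjTranspose_submatrix, conjTranspose_one,
    ← submatrix_mul _ _ f id f Function.bijective_id, Matrix.one_mul, submatrix_one f hf]

theorem l2_opNorm_submatrix_le {k : Type*} [Fintype k] [DecidableEq k] (M : Matrix m n 𝕜)
    {f : k → m} {g : l → n} (hf : Function.Injective f) (hg : Function.Injective g) :
    ‖M.submatrix f g‖ ≤ ‖M‖ := by
  have hcompress : M.submatrix f g
      = (1 : Matrix m m 𝕜).submatrix f id * M * ((1 : Matrix n n 𝕜).submatrix g id)ᴴ := by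
    ext i j
    simp [mul_apply, one_apply]
  calc ‖M.submatrix f g‖
      ≤ ‖(1 : Matrix m m 𝕜).submatrix f id‖ * ‖M‖ * ‖((1 : Matrix n n 𝕜).submatrix g id)ᴴ‖ := by
        rw [hcompress]
        exact (l2_opNorm_mul _ _).trans (by gcongr; exact l2_opNorm_mul _ _)
    _ ≤ 1 * ‖M‖ * 1 := by
        rw [l2_opNorm_conjTranspose]
        gcongr
        exacts [l2_opNorm_one_submatrix_le hf, l2_opNorm_one_submatrix_le hg]
    _ = ‖M‖ := by ring

end L2OpNorm

theorem submatrix_equiv_mem_unitaryGroup {α m n : Type*} [CommRing α] [StarRing α]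
    [Fintype m] [Fintype n] [DecidableEq m] [DecidableEq n] {U : Matrix n n α}
    (hU : U ∈ unitaryGroup n α) (e : m ≃ n) : U.submatrix e e ∈ unitaryGroup m α := by
  rw [mem_unitaryGroup_iff', star_eq_conjTranspose, conjTranspose_submatrix,
    submatrix_mul_equiv, ← star_eq_conjTranspose, hU.1, submatrix_one_equiv]

section EncodedBlock

variable {a s : Type*} [Fintype a] [DecidableEq a] [Fintype s] [DecidableEq s]

def encodedBlock {R : Type*} (z : a) (U : Matrix (a × s) (a × s) R) : Matrix s s R :=
  U.submatrix (Prod.mk z) (Prod.mk z)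

theorem isBlockEncoding_iff {z : a} {α ε : ℝ} {U : Matrix (a × s) (a × s) ℂ} {A : Matrix s s ℂ} :
    IsBlockEncoding z α ε U A ↔ U ∈ unitaryGroup (a × s) ℂ ∧ ‖A - α • encodedBlock z U‖ ≤ ε :=
  Iff.rfl

theorem l2_opNorm_encodedBlock_le_one {z : a} {U : Matrix (a × s) (a × s) ℂ}
    (hU : U ∈ unitaryGroup (a × s) ℂ) :
    ‖encodedBlock z U‖ ≤ 1 :=
  (l2_opNorm_submatrix_le U (Prod.mk_right_injective z) (Prod.mk_right_injective z)).trans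
    (l2_opNorm_le_one_of_mul_conjTranspose_eq_one hU.2)

end EncodedBlock

section AncillaRegisters

variable {a₁ a₂ s R : Type*} [Fintype a₁] [DecidableEq a₁] [Fintype a₂] [DecidableEq a₂]
  [Fintype s]

theorem encodedBlock_mul_of_apply_eq_ite [NonUnitalNonAssocSemiring R] {z₁ : a₁} {z₂ : a₂}
    {U₁ : Matrix (a₁ × s) (a₁ × s) R} {U₂ : Matrix (a₂ × s) (a₂ × s) R}
    {W₁ W₂ : Matrix ((a₁ × a₂) × s) ((a₁ × a₂) × s) R}
    (hW₁ : ∀ (p p' : a₁) (q q' : a₂) (i j : s),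
      W₁ ((p, q), i) ((p', q'), j) = if q = q' then U₁ (p, i) (p', j) else 0)
    (hW₂ : ∀ (p p' : a₁) (q q' : a₂) (i j : s),
      W₂ ((p, q), i) ((p', q'), j) = if p = p' then U₂ (q, i) (q', j) else 0) :
    encodedBlock (z₁, z₂) (W₁ * W₂) = encodedBlock z₁ U₁ * encodedBlock z₂ U₂ := by
  ext i j
  simp [encodedBlock, mul_apply, Fintype.sum_prod_type, hW₁, hW₂]

theorem mem_unitaryGroup_of_apply_eq_ite_fst [DecidableEq s] [CommRing R] [StarRing R]
    {U₁ : Matrix (a₁ × s) (a₁ × s) R} (hU₁ : U₁ ∈ unitaryGroup (a₁ × s) R)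
    {W₁ : Matrix ((a₁ × a₂) × s) ((a₁ × a₂) × s) R}
    (hW₁ : ∀ (p p' : a₁) (q q' : a₂) (i j : s),
      W₁ ((p, q), i) ((p', q'), j) = if q = q' then U₁ (p, i) (p', j) else 0) :
    W₁ ∈ unitaryGroup ((a₁ × a₂) × s) R := by
  let e := ((Equiv.prodComm a₁ a₂).prodCongr (Equiv.refl s)).trans (Equiv.prodAssoc a₂ a₁ s)
  have hW : W₁ = ((1 : Matrix a₂ a₂ R) ⊗ₖ U₁).submatrix e e := by
    ext ⟨⟨p, q⟩, i⟩ ⟨⟨p', q'⟩, j⟩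
    simp [e, hW₁, one_apply]
  rw [hW]
  exact submatrix_equiv_mem_unitaryGroup (kronecker_mem_unitary (one_mem _) hU₁) e

theorem mem_unitaryGroup_of_apply_eq_ite_snd [DecidableEq s] [CommRing R] [StarRing R]
    {U₂ : Matrix (a₂ × s) (a₂ × s) R} (hU₂ : U₂ ∈ unitaryGroup (a₂ × s) R)
    {W₂ : Matrix ((a₁ × a₂) × s) ((a₁ × a₂) × s) R}
    (hW₂ : ∀ (p p' : a₁) (q q' : a₂) (i j : s),
      W₂ ((p, q), i) ((p', q'), j) = if p = p' then U₂ (q, i) (q', j) else 0) :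
    W₂ ∈ unitaryGroup ((a₁ × a₂) × s) R := by
  let e := Equiv.prodAssoc a₁ a₂ s
  have hW : W₂ = ((1 : Matrix a₁ a₁ R) ⊗ₖ U₂).submatrix e e := by
    ext ⟨⟨p, q⟩, i⟩ ⟨⟨p', q'⟩, j⟩
    simp [e, hW₂, one_apply]
  rw [hW]
  exact submatrix_equiv_mem_unitaryGroup (kronecker_mem_unitary (one_mem _) hU₂) e

end AncillaRegisters

theorem stmt14_general {a₁ a₂ s : Type*} [Fintype a₁] [DecidableEq a₁] [Fintype a₂] [DecidableEq a₂]
    [Fintype s] [DecidableEq s] (z₁ : a₁) (z₂ : a₂)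
    (α₁ α₂ ε₁ ε₂ : ℝ) (hα₁ : 0 ≤ α₁)
    (A₁ A₂ : Matrix s s ℂ) (hA₂ : specNorm A₂ ≤ α₂)
    (U₁ : Matrix (a₁ × s) (a₁ × s) ℂ) (U₂ : Matrix (a₂ × s) (a₂ × s) ℂ)
    (h₁ : IsBlockEncoding z₁ α₁ ε₁ U₁ A₁)
    (h₂ : IsBlockEncoding z₂ α₂ ε₂ U₂ A₂)
    (W₁ W₂ : Matrix ((a₁ × a₂) × s) ((a₁ × a₂) × s) ℂ)
    (hW₁ : ∀ (p p' : a₁) (q q' : a₂) (i j : s),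
      W₁ ((p, q), i) ((p', q'), j) = if q = q' then U₁ (p, i) (p', j) else 0)
    (hW₂ : ∀ (p p' : a₁) (q q' : a₂) (i j : s),
      W₂ ((p, q), i) ((p', q'), j) = if p = p' then U₂ (q, i) (q', j) else 0) :
    IsBlockEncoding (z₁, z₂) (α₁ * α₂) (α₁ * ε₂ + α₂ * ε₁) (W₁ * W₂) (A₁ * A₂) := by
  rw [isBlockEncoding_iff] at h₁ h₂ ⊢
  obtain ⟨hU₁, hB₁⟩ := h₁
  obtain ⟨hU₂, hB₂⟩ := h₂
  refine ⟨mul_mem (mem_unitaryGroup_of_apply_eq_ite_fst hU₁ hW₁)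
    (mem_unitaryGroup_of_apply_eq_ite_snd hU₂ hW₂), ?_⟩
  rw [encodedBlock_mul_of_apply_eq_ite hW₁ hW₂]
  exact norm_mul_sub_smul_mul_le hα₁ (l2_opNorm_encodedBlock_le_one hU₁) hA₂ hB₁ hB₂

/-- product of block-encodings: with `W₁ = I_{a₂} ⊗ U₁` and
`W₂ = I_{a₁} ⊗ U₂` (ancilla registers appropriately tensored), `W₁ * W₂` is an
`(α₁α₂, m₁+m₂, α₁ε₂ + α₂ε₁)`-block-encoding of `A₁ A₂`. -/
theorem stmt14 {a₁ a₂ s : Type*} [Fintype a₁] [DecidableEq a₁] [Fintype a₂] [DecidableEq a₂]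
    [Fintype s] [DecidableEq s] (z₁ : a₁) (z₂ : a₂)
    (α₁ α₂ ε₁ ε₂ : ℝ) (hα₁ : 0 ≤ α₁) (hα₂ : 0 ≤ α₂)
    (A₁ A₂ : Matrix s s ℂ) (hA₂ : specNorm A₂ ≤ α₂)
    (U₁ : Matrix (a₁ × s) (a₁ × s) ℂ) (U₂ : Matrix (a₂ × s) (a₂ × s) ℂ)
    (h₁ : IsBlockEncoding z₁ α₁ ε₁ U₁ A₁)
    (h₂ : IsBlockEncoding z₂ α₂ ε₂ U₂ A₂)
    (W₁ W₂ : Matrix ((a₁ × a₂) × s) ((a₁ × a₂) × s) ℂ)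
    (hW₁ : ∀ (p p' : a₁) (q q' : a₂) (i j : s),
      W₁ ((p, q), i) ((p', q'), j) = if q = q' then U₁ (p, i) (p', j) else 0)
    (hW₂ : ∀ (p p' : a₁) (q q' : a₂) (i j : s),
      W₂ ((p, q), i) ((p', q'), j) = if p = p' then U₂ (q, i) (q', j) else 0) :
    IsBlockEncoding (z₁, z₂) (α₁ * α₂) (α₁ * ε₂ + α₂ * ε₁) (W₁ * W₂) (A₁ * A₂) :=
  stmt14_general z₁ z₂ α₁ α₂ ε₁ ε₂ hα₁ A₁ A₂ hA₂ U₁ U₂ h₁ h₂ W₁ W₂ hW₁ hW₂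
end
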